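/- Let ξ ≥ 0. Suppose {z^k} ⊂ ℝ^d is a bounded sequence with F_nor(z^k) → 0 and ψ(prox_{λφ}(z^k)) → ψ* for some ψ* ∈ ℝ as k → ∞. Then the set 𝔄 of accumulation points of {z^k} is nonempty and compact; every z̄ ∈ 𝔄 satisfies F_nor(z̄) = 0 and prox_{λφ}(z̄) ∈ crit ψ; and for every z̄ ∈ 𝔄 one has ψ(prox_{λφ}(z̄)) = ψ* and H_ξ(z̄) = ψ*. -/

import Mathlib

open MeasureTheory Filter Real Set Topology
open scoped ENNReal NNReal

variable {d : ℕ}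

local notation "E" => EuclideanSpace ℝ (Fin d)
local notation "⟪" x ", " y "⟫" => @inner ℝ _ _ x y

/-- The normal map `F_nor(z) = ∇f(prox z) + (z - prox z)/λ`. -/
noncomputable def Fnor (f' prox : E → E) (lam : ℝ) (z : E) : E :=
  f' (prox z) + lam⁻¹ • (z - prox z)

/-- The natural residual `F_nat(x) = x - prox(x - λ ∇f x)`. -/
noncomputable def Fnat (f' prox : E → E) (lam : ℝ) (x : E) : E :=
  x - prox (x - lam • f' x)

/-- The convex subdifferential of an `EReal`-valued function. -/
def subdiff (φ : E → EReal) (x : E) : Set E :=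
  {v : E | ∀ y : E, φ x + ((⟪v, y - x⟫ : ℝ) : EReal) ≤ φ y}

/-- The real value of `ψ = f + φ` (finite on the effective domain of `φ`). -/
noncomputable def psiR (f : E → ℝ) (φ : E → EReal) (x : E) : ℝ :=
  f x + (φ x).toReal

/-- The merit function `H_ξ(z) = ψ(prox z) + (ξ λ / 2) ‖F_nor z‖²`. -/
noncomputable def Hmer (f : E → ℝ) (φ : E → EReal) (f' prox : E → E) (lam ξ : ℝ) (z : E) : ℝ :=
  psiR f φ (prox z) + ξ * lam / 2 * ‖Fnor f' prox lam z‖ ^ 2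

/-- The KL inequality at `xbar` with desingularizing function `s ↦ c s^(1-θ)`. -/
def KLAt (f : E → ℝ) (f' : E → E) (φ : E → EReal) (c θ : ℝ) (xbar : E) : Prop :=
  ∃ η > (0 : ℝ), ∃ U ∈ nhds xbar, ∀ v ∈ U,
    0 < |psiR f φ v - psiR f φ xbar| → |psiR f φ v - psiR f φ xbar| < η →
      ∀ w ∈ subdiff φ v,
        1 ≤ c * (1 - θ) * |psiR f φ v - psiR f φ xbar| ^ (-θ) * ‖f' v + w‖

/-! The proximal map is characterised by `λ⁻¹ • (z - prox z) ∈ ∂φ (prox z)`. Monotonicity of `∂φ`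
makes it firmly nonexpansive, hence continuous, and then `F_nor` is continuous too. The
subsequential limits of the bounded sequence `z` are its cluster points, a nonempty compact set.
Along a subsequence `z (q k) → z̄`, continuity gives `F_nor z̄ = 0`, which says exactly
`-∇f (prox z̄) = λ⁻¹ • (z̄ - prox z̄) ∈ ∂φ (prox z̄)`. Finally `φ (prox (z (q k))) → φ (prox z̄)`
because the subgradient inequalities at `prox (z (q k))` and at `prox z̄`, whose subgradients
converge, squeeze these values from both sides; so `ψ (prox z̄) = ψ*`, and `H_ξ z̄ = ψ*` since the
normal map vanishes at `z̄`. -/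

theorem setOf_subseq_tendsto_eq_setOf_mapClusterPt {X : Type*} [TopologicalSpace X]
    [FirstCountableTopology X] (u : ℕ → X) :
    {x | ∃ q : ℕ → ℕ, StrictMono q ∧ Tendsto (fun k => u (q k)) atTop (𝓝 x)} =
      {x | MapClusterPt x atTop u} := by
  ext x
  constructor
  · rintro ⟨q, hq, hqx⟩
    exact hqx.mapClusterPt.of_comp hq.tendsto_atTop
  · exact MapClusterPt.tendsto_subseq

theorem Bornology.IsBounded.nonempty_and_isCompact_setOf_mapClusterPt {X : Type*}
    [PseudoMetricSpace X] [ProperSpace X] {u : ℕ → X} (hu : Bornology.IsBounded (range u)) :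
    {x | MapClusterPt x atTop u}.Nonempty ∧ IsCompact {x | MapClusterPt x atTop u} := by
  have hK := hu.isCompact_closure
  have hsub : {x | MapClusterPt x atTop u} ⊆ closure (range u) := fun x hx =>
    closure_mono (image_subset_range _ _) (mapClusterPt_atTop_iff_forall_mem_closure.1 hx 0)
  obtain ⟨x, -, hx⟩ := hK.exists_mapClusterPt (f := atTop) (u := u)
    (tendsto_principal.2 (Eventually.of_forall fun n => subset_closure (mem_range_self n)))
  exact ⟨⟨x, hx⟩, hK.of_isClosed_subset isClosed_setOfPred_clusterPt hsub⟩

theorem EReal.toReal_add_le_toReal_add {a b : EReal} {r s : ℝ} (ha : a ≠ ⊥) (hb : b ≠ ⊥)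
    (hb' : b ≠ ⊤) (h : a + r ≤ b + s) : a.toReal + r ≤ b.toReal + s := by
  lift b to ℝ using ⟨hb', hb⟩
  have ha' : a ≠ ⊤ := by
    rintro rfl
    exact absurd h (not_le.2 (EReal.coe_add b s ▸ EReal.coe_lt_top _))
  lift a to ℝ using ⟨ha', ha⟩
  exact_mod_cast h

def ERealConvex {V : Type*} [AddCommGroup V] [Module ℝ V] (φ : V → EReal) : Prop :=
  ∀ u v : V, ∀ a b : ℝ, 0 ≤ a → 0 ≤ b → a + b = 1 →
    φ (a • u + b • v) ≤ (a : EReal) * φ u + (b : EReal) * φ v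

theorem ERealConvex.apply_le_toReal {V : Type*} [AddCommGroup V] [Module ℝ V] {φ : V → EReal}
    (hφ : ERealConvex φ) (hbot : ∀ v, φ v ≠ ⊥) {x y : V} (hx : φ x ≠ ⊤) (hy : φ y ≠ ⊤)
    {t : ℝ} (ht₀ : 0 ≤ t) (ht₁ : t ≤ 1) :
    φ ((1 - t) • x + t • y) ≤ (((1 - t) * (φ x).toReal + t * (φ y).toReal : ℝ) : EReal) := by
  have h := hφ x y (1 - t) t (by linarith) ht₀ (by ring)
  rwa [← EReal.coe_toReal hx (hbot x), ← EReal.coe_toReal hy (hbot y), ← EReal.coe_mul,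
    ← EReal.coe_mul, ← EReal.coe_add] at h

theorem toReal_add_inner_le_of_mem_subdiff {φ : E → EReal} (hbot : ∀ v, φ v ≠ ⊥) {x y v : E}
    (hv : v ∈ subdiff φ x) (hy : φ y ≠ ⊤) : (φ x).toReal + ⟪v, y - x⟫ ≤ (φ y).toReal := by
  simpa using EReal.toReal_add_le_toReal_add (s := 0) (hbot x) (hbot y) hy (by simpa using hv y)

theorem inner_sub_sub_nonneg_of_mem_subdiff {φ : E → EReal} (hbot : ∀ v, φ v ≠ ⊥)
    {x y v w : E} (hv : v ∈ subdiff φ x) (hw : w ∈ subdiff φ y) (hx : φ x ≠ ⊤) (hy : φ y ≠ ⊤) :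
    0 ≤ ⟪v - w, x - y⟫ := by
  have hvy := toReal_add_inner_le_of_mem_subdiff hbot hv hy
  have hwx := toReal_add_inner_le_of_mem_subdiff hbot hw hx
  have hswap : ⟪v, x - y⟫ = -⟪v, y - x⟫ := by rw [← inner_neg_right, neg_sub]
  rw [inner_sub_left, hswap]
  linarith

theorem tendsto_toReal_of_mem_subdiff {ι : Type*} {l : Filter ι} {φ : E → EReal}
    (hbot : ∀ v, φ v ≠ ⊥) {x v : ι → E} {x₀ v₀ : E} (hx : Tendsto x l (𝓝 x₀))
    (hv : Tendsto v l (𝓝 v₀)) (hxv : ∀ i, v i ∈ subdiff φ (x i)) (hxtop : ∀ i, φ (x i) ≠ ⊤)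
    {w₀ : E} (hw₀ : w₀ ∈ subdiff φ x₀) (hx₀top : φ x₀ ≠ ⊤) :
    Tendsto (fun i => (φ (x i)).toReal) l (𝓝 (φ x₀).toReal) := by
  have hlower : Tendsto (fun i => (φ x₀).toReal + ⟪w₀, x i - x₀⟫) l (𝓝 (φ x₀).toReal) := by
    simpa using ((tendsto_const_nhds.inner (hx.sub_const x₀)).const_add _ :
      Tendsto _ l (𝓝 ((φ x₀).toReal + ⟪w₀, x₀ - x₀⟫)))
  have hupper : Tendsto (fun i => (φ x₀).toReal - ⟪v i, x₀ - x i⟫) l (𝓝 (φ x₀).toReal) := by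
    simpa using ((hv.inner (tendsto_const_nhds.sub hx)).const_sub _ :
      Tendsto _ l (𝓝 ((φ x₀).toReal - ⟪v₀, x₀ - x₀⟫)))
  refine tendsto_of_tendsto_of_tendsto_of_le_of_le hlower hupper
    (fun i => toReal_add_inner_le_of_mem_subdiff hbot hw₀ (hxtop i)) (fun i => ?_)
  linarith [toReal_add_inner_le_of_mem_subdiff hbot (hxv i) hx₀top]

def IsProxMap (φ : E → EReal) (lam : ℝ) (prox : E → E) : Prop :=
  ∀ u v : E, φ (prox u) + ((‖u - prox u‖ ^ 2 / (2 * lam) : ℝ) : EReal)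
    ≤ φ v + ((‖u - v‖ ^ 2 / (2 * lam) : ℝ) : EReal)

namespace IsProxMap

theorem apply_ne_top {φ : E → EReal} {lam : ℝ} {prox : E → E} (hprox : IsProxMap φ lam prox)
    (hdom : ∃ v, φ v ≠ ⊤) (u : E) : φ (prox u) ≠ ⊤ := by
  obtain ⟨v, hv⟩ := hdom
  intro htop
  have h := hprox u v
  rw [htop, EReal.top_add_coe, top_le_iff] at h
  exact EReal.add_lt_top hv (EReal.coe_ne_top _) |>.ne h

theorem toReal_add_le {φ : E → EReal} {lam : ℝ} {prox : E → E} (hprox : IsProxMap φ lam prox)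
    (hbot : ∀ v, φ v ≠ ⊥) (u : E) {v : E} (hv : φ v ≠ ⊤) :
    (φ (prox u)).toReal + ‖u - prox u‖ ^ 2 / (2 * lam)
      ≤ (φ v).toReal + ‖u - v‖ ^ 2 / (2 * lam) :=
  EReal.toReal_add_le_toReal_add (hbot _) (hbot v) hv (hprox u v)

-- Optimality of `prox u` against `(1 - t) • prox u + t • y`, plus convexity on that segment.
theorem toReal_add_inner_le {φ : E → EReal} {lam : ℝ} {prox : E → E}
    (hprox : IsProxMap φ lam prox) (hconv : ERealConvex φ)
    (hbot : ∀ v, φ v ≠ ⊥) (hdom : ∃ v, φ v ≠ ⊤) (hlam : 0 < lam) (u : E) {y : E}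
    (hy : φ y ≠ ⊤) {t : ℝ} (ht₀ : 0 < t) (ht₁ : t ≤ 1) :
    (φ (prox u)).toReal + lam⁻¹ * ⟪u - prox u, y - prox u⟫
      ≤ (φ y).toReal + t * (‖y - prox u‖ ^ 2 / (2 * lam)) := by
  set x := prox u
  have hx := hprox.apply_ne_top hdom u
  set w := (1 - t) • x + t • y
  have hw_le := hconv.apply_le_toReal hbot hx hy ht₀.le ht₁
  have hw : φ w ≠ ⊤ := ne_top_of_le_ne_top (EReal.coe_ne_top _) hw_le
  have hconvR : (φ w).toReal ≤ (1 - t) * (φ x).toReal + t * (φ y).toReal :=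
    (EReal.toReal_le_toReal hw_le (hbot w) (EReal.coe_ne_top _)).trans_eq (EReal.toReal_coe _)
  have hproxR := hprox.toReal_add_le hbot u hw
  have hnorm : ‖u - w‖ ^ 2 = ‖u - x‖ ^ 2 - 2 * t * ⟪u - x, y - x⟫ + t ^ 2 * ‖y - x‖ ^ 2 := by
    have : u - w = (u - x) - t • (y - x) := by simp only [w]; module
    rw [this, norm_sub_sq_real, real_inner_smul_right, norm_smul, Real.norm_of_nonneg ht₀.le]
    ring
  rw [hnorm] at hproxR
  have key : t * ((φ x).toReal + lam⁻¹ * ⟪u - x, y - x⟫)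
      ≤ t * ((φ y).toReal + t * (‖y - x‖ ^ 2 / (2 * lam))) := by
    have hdiv : ∀ c : ℝ, c / (2 * lam) = lam⁻¹ * c / 2 := fun c => by field_simp
    rw [hdiv, hdiv] at hproxR
    rw [hdiv]
    nlinarith
  exact le_of_mul_le_mul_left key ht₀

theorem smul_sub_mem_subdiff {φ : E → EReal} {lam : ℝ} {prox : E → E}
    (hprox : IsProxMap φ lam prox) (hconv : ERealConvex φ)
    (hbot : ∀ v, φ v ≠ ⊥) (hdom : ∃ v, φ v ≠ ⊤) (hlam : 0 < lam) (u : E) :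
    lam⁻¹ • (u - prox u) ∈ subdiff φ (prox u) := by
  intro y
  by_cases hy : φ y = ⊤
  · rw [hy]; exact le_top
  rw [← EReal.coe_toReal (hprox.apply_ne_top hdom u) (hbot _), ← EReal.coe_toReal hy (hbot y),
    ← EReal.coe_add, EReal.coe_le_coe_iff, real_inner_smul_left]
  set C := ‖y - prox u‖ ^ 2 / (2 * lam)
  have hlim : Tendsto (fun t : ℝ => (φ y).toReal + t * C) (𝓝[>] 0) (𝓝 (φ y).toReal) := by
    simpa using (((continuous_mul_const C).tendsto 0).const_add _).mono_left nhdsWithin_le_nhds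
  refine ge_of_tendsto hlim ?_
  filter_upwards [Ioc_mem_nhdsGT one_pos] with t ht
  exact hprox.toReal_add_inner_le hconv hbot hdom hlam u hy ht.1 ht.2

theorem lipschitzWith_one {φ : E → EReal} {lam : ℝ} {prox : E → E}
    (hprox : IsProxMap φ lam prox) (hconv : ERealConvex φ) (hbot : ∀ v, φ v ≠ ⊥)
    (hdom : ∃ v, φ v ≠ ⊤) (hlam : 0 < lam) : LipschitzWith 1 prox := by
  refine LipschitzWith.of_dist_le_mul fun u w => ?_
  rw [NNReal.coe_one, one_mul, dist_eq_norm, dist_eq_norm]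
  have hmono := inner_sub_sub_nonneg_of_mem_subdiff hbot
    (hprox.smul_sub_mem_subdiff hconv hbot hdom hlam u)
    (hprox.smul_sub_mem_subdiff hconv hbot hdom hlam w)
    (hprox.apply_ne_top hdom u) (hprox.apply_ne_top hdom w)
  rw [← smul_sub, real_inner_smul_left] at hmono
  have hfirm : ‖prox u - prox w‖ ^ 2 ≤ ⟪u - w, prox u - prox w⟫ := by
    have h := nonneg_of_mul_nonneg_right hmono (inv_pos.2 hlam)
    rw [show u - prox u - (w - prox w) = (u - w) - (prox u - prox w) by abel, inner_sub_left,
      real_inner_self_eq_norm_sq] at h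
    linarith
  have hcs := real_inner_le_norm (u - w) (prox u - prox w)
  nlinarith [norm_nonneg (u - w), norm_nonneg (prox u - prox w)]

theorem tendsto_psiR {φ : E → EReal} {lam : ℝ} {prox : E → E}
    (hprox : IsProxMap φ lam prox) (hconv : ERealConvex φ) (hbot : ∀ v, φ v ≠ ⊥)
    (hdom : ∃ v, φ v ≠ ⊤) (hlam : 0 < lam) {f : E → ℝ} (hf : Continuous f) {ι : Type*}
    {l : Filter ι} {z : ι → E} {z₀ : E} (hz : Tendsto z l (𝓝 z₀)) :
    Tendsto (fun i => psiR f φ (prox (z i))) l (𝓝 (psiR f φ (prox z₀))) := by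
  have hx : Tendsto (fun i => prox (z i)) l (𝓝 (prox z₀)) :=
    ((hprox.lipschitzWith_one hconv hbot hdom hlam).continuous.tendsto z₀).comp hz
  have hv : Tendsto (fun i => lam⁻¹ • (z i - prox (z i))) l (𝓝 (lam⁻¹ • (z₀ - prox z₀))) :=
    (hz.sub hx).const_smul _
  exact ((hf.tendsto _).comp hx).add <| tendsto_toReal_of_mem_subdiff hbot hx hv
    (fun i => hprox.smul_sub_mem_subdiff hconv hbot hdom hlam (z i))
    (fun i => hprox.apply_ne_top hdom (z i))
    (hprox.smul_sub_mem_subdiff hconv hbot hdom hlam z₀) (hprox.apply_ne_top hdom z₀)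

end IsProxMap

theorem stmt12_general
    (f : E → ℝ) (f' : E → E) (φ : E → EReal) (prox : E → E) (lam : ℝ)
    (hlam : 0 < lam)
    (hf : ∀ v : E, HasGradientAt f (f' v) v) (hf'cont : Continuous f')
    (hφconv : ∀ u v : E, ∀ a b : ℝ, 0 ≤ a → 0 ≤ b → a + b = 1 →
      φ (a • u + b • v) ≤ (a : EReal) * φ u + (b : EReal) * φ v)
    (hφnebot : ∀ v : E, φ v ≠ ⊥) (hφnetop : ∃ v : E, φ v ≠ ⊤)
    (hprox : ∀ u v : E,
      φ (prox u) + ((‖u - prox u‖ ^ 2 / (2 * lam) : ℝ) : EReal)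
        ≤ φ v + ((‖u - v‖ ^ 2 / (2 * lam) : ℝ) : EReal))
    (ξ : ℝ)
    (z : ℕ → E) (hbdd : ∃ R : ℝ, ∀ k, ‖z k‖ ≤ R)
    (hFnor : Tendsto (fun k => Fnor f' prox lam (z k)) atTop (nhds 0))
    (ψstar : ℝ)
    (hψ : Tendsto (fun k => psiR f φ (prox (z k))) atTop (nhds ψstar)) :
    ∀ 𝔄 : Set E,
      𝔄 = {zbar : E | ∃ q : ℕ → ℕ, StrictMono q ∧
            Tendsto (fun k => z (q k)) atTop (nhds zbar)} →
      𝔄.Nonempty ∧ IsCompact 𝔄 ∧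
        ∀ zbar ∈ 𝔄,
          Fnor f' prox lam zbar = 0 ∧
          -f' (prox zbar) ∈ subdiff φ (prox zbar) ∧
          psiR f φ (prox zbar) = ψstar ∧
          Hmer f φ f' prox lam ξ zbar = ψstar := by
  rintro _ rfl
  have hprox' : IsProxMap φ lam prox := hprox
  have hconv : ERealConvex φ := hφconv
  have hproxCont := (hprox'.lipschitzWith_one hconv hφnebot hφnetop hlam).continuous
  have hFnorCont : Continuous (Fnor f' prox lam) :=
    (hf'cont.comp hproxCont).add ((continuous_id.sub hproxCont).const_smul lam⁻¹)
  have hfCont : Continuous f := continuous_iff_continuousAt.2 fun v => (hf v).continuousAt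
  obtain ⟨R, hR⟩ := hbdd
  obtain ⟨hne, hcpt⟩ := (isBounded_iff_forall_norm_le.2 ⟨R, forall_mem_range.2 hR⟩)
    |>.nonempty_and_isCompact_setOf_mapClusterPt
  rw [setOf_subseq_tendsto_eq_setOf_mapClusterPt]
  refine ⟨hne, hcpt, fun zbar hzbar => ?_⟩
  obtain ⟨q, hq, hqz⟩ := MapClusterPt.tendsto_subseq hzbar
  have hF0 : Fnor f' prox lam zbar = 0 :=
    tendsto_nhds_unique ((hFnorCont.tendsto zbar).comp hqz) (hFnor.comp hq.tendsto_atTop)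
  have hψ0 : psiR f φ (prox zbar) = ψstar :=
    tendsto_nhds_unique (hprox'.tendsto_psiR hconv hφnebot hφnetop hlam hfCont hqz)
      (hψ.comp hq.tendsto_atTop)
  refine ⟨hF0, ?_, hψ0, by simp [Hmer, hF0, hψ0]⟩
  rw [neg_eq_of_add_eq_zero_right hF0]
  exact hprox'.smul_sub_mem_subdiff hconv hφnebot hφnetop hlam zbar

/-- Properties of the set of accumulation points. -/
theorem stmt12
    (f : E → ℝ) (f' : E → E) (φ : E → EReal) (prox : E → E) (lam : ℝ)
    (hlam : 0 < lam)
    (hf : ∀ v : E, HasGradientAt f (f' v) v) (hf'cont : Continuous f')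
    (hφconv : ∀ u v : E, ∀ a b : ℝ, 0 ≤ a → 0 ≤ b → a + b = 1 →
      φ (a • u + b • v) ≤ (a : EReal) * φ u + (b : EReal) * φ v)
    (hφlsc : LowerSemicontinuous φ)
    (hφnebot : ∀ v : E, φ v ≠ ⊥) (hφnetop : ∃ v : E, φ v ≠ ⊤)
    (hprox : ∀ u v : E,
      φ (prox u) + ((‖u - prox u‖ ^ 2 / (2 * lam) : ℝ) : EReal)
        ≤ φ v + ((‖u - v‖ ^ 2 / (2 * lam) : ℝ) : EReal))
    (ξ : ℝ) (hξ : 0 ≤ ξ)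
    (z : ℕ → E) (hbdd : ∃ R : ℝ, ∀ k, ‖z k‖ ≤ R)
    (hFnor : Tendsto (fun k => Fnor f' prox lam (z k)) atTop (nhds 0))
    (ψstar : ℝ)
    (hψ : Tendsto (fun k => psiR f φ (prox (z k))) atTop (nhds ψstar)) :
    ∀ 𝔄 : Set E,
      𝔄 = {zbar : E | ∃ q : ℕ → ℕ, StrictMono q ∧
            Tendsto (fun k => z (q k)) atTop (nhds zbar)} →
      𝔄.Nonempty ∧ IsCompact 𝔄 ∧
        ∀ zbar ∈ 𝔄,
          Fnor f' prox lam zbar = 0 ∧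
          -f' (prox zbar) ∈ subdiff φ (prox zbar) ∧
          psiR f φ (prox zbar) = ψstar ∧
          Hmer f φ f' prox lam ξ zbar = ψstar :=
  stmt12_general f f' φ prox lam hlam hf hf'cont hφconv hφnebot hφnetop hprox ξ z hbdd hFnor ψstar
    hψ
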